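/- The involution numbers cd(n) satisfy the asymptotic n-th root growth: cd(n)^{1/n} / sqrt(n) converges to 1/sqrt(e) as n tends to infinity. -/

import Mathlib

open Filter

/-- `cd n` is the number of involutions in the symmetric group on `n` letters (OEIS A000085). -/
noncomputable def cd (n : ℕ) : ℕ :=
  Nat.card {g : Equiv.Perm (Fin n) // g ^ 2 = 1}

/-!
Splitting an involution of `Option α` according to the image of `none` gives the recurrence
`cd (n + 2) = cd (n + 1) + (n + 1) * cd n`. It traps the ratio `cd (n + 1) / cd n` between `√(n + 1)`
and `1 + √n`, so the increments of `log (cd n) - (n / 2) * log n` tend to `-1/2`. By Cesàro, so does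
its average `(log (cd n) - (n / 2) * log n) / n = log (cd n ^ (1 / n) / √n)`.
-/

open Equiv Equiv.Perm

section Involutions

variable {α : Type*}

lemma optionCongr_sq (e : Perm α) : (optionCongr e) ^ 2 = optionCongr (e ^ 2) := by
  simp only [sq, Perm.mul_def, optionCongr_trans]

lemma optionCongr_sq_eq_one_iff (e : Perm α) : (optionCongr e) ^ 2 = 1 ↔ e ^ 2 = 1 := by
  rw [optionCongr_sq, ← optionCongr_one, optionCongr_injective.eq_iff]

lemma sq_swap_none_mul_optionCongr_eq_one_iff [DecidableEq α] (i : Option α) (e : Perm α) :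
    (swap none i * optionCongr e) ^ 2 = 1 ↔ e ^ 2 = 1 ∧ ∀ a, i = some a → e a = a := by
  cases i with
  | none => simp [← Perm.one_def, optionCongr_sq_eq_one_iff]
  | some a =>
    have hsq (ha : e a = a) : (swap none (some a) * optionCongr e) ^ 2 = optionCongr e ^ 2 := by
      have hcomm : Commute (swap none (some a)) (optionCongr e) := by
        simp [Commute, SemiconjBy, mul_swap_eq_swap_mul, ha]
      rw [hcomm.mul_pow, sq (swap _ _), swap_mul_self, one_mul]
    simp only [Option.some.injEq, forall_eq']
    refine ⟨fun h => ?_, fun ⟨he, ha⟩ => by rw [hsq ha, optionCongr_sq_eq_one_iff, he]⟩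
    have ha : e a = a := by simpa [sq, swap_apply_eq_iff] using congr($h none)
    exact ⟨(optionCongr_sq_eq_one_iff e).1 (hsq ha ▸ h), ha⟩

lemma natCard_involutions_option [Fintype α] [DecidableEq α] :
    Nat.card {σ : Perm (Option α) // σ ^ 2 = 1} =
      Nat.card {g : Perm α // g ^ 2 = 1} + ∑ a, Nat.card {g : Perm α // g ^ 2 = 1 ∧ g a = a} := by
  let decompose : {p : Option α × Perm α // p.2 ^ 2 = 1 ∧ ∀ a, p.1 = some a → p.2 a = a} ≃
      {σ : Perm (Option α) // σ ^ 2 = 1} :=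
    decomposeOption.symm.subtypeEquiv fun p => by
      rw [decomposeOption_symm_apply, sq_swap_none_mul_optionCongr_eq_one_iff]
  rw [← Nat.card_congr decompose,
    Nat.card_congr (subtypeProdEquivSigmaSubtype fun (i : Option α) (e : Perm α) =>
      e ^ 2 = 1 ∧ ∀ a, i = some a → e a = a),
    Nat.card_sigma, Fintype.sum_option]
  simp

lemma natCard_involutions_fixing [DecidableEq α] (a : α) :
    Nat.card {g : Perm α // g ^ 2 = 1 ∧ g a = a} =
      Nat.card {g : Perm {x // x ≠ a} // g ^ 2 = 1} := by
  refine (Nat.card_congr <| ((Perm.subtypeEquivSubtypePerm (· ≠ a)).subtypeEquiv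
    (p := fun g => g ^ 2 = 1) (q := fun g => g.1 ^ 2 = 1) fun g => ?_).trans ?_).symm
  · simp [← map_pow, map_eq_one_iff _ ofSubtype_injective]
  · exact (subtypeSubtypeEquivSubtypeInter (fun g : Perm α => ∀ x, ¬x ≠ a → g x = x)
      (· ^ 2 = 1)).trans (subtypeEquivRight fun g => by simp [and_comm])

lemma natCard_sq_eq_one_congr {G H : Type*} [Monoid G] [Monoid H] (φ : G ≃* H) :
    Nat.card {g : G // g ^ 2 = 1} = Nat.card {h : H // h ^ 2 = 1} :=
  Nat.card_congr <| φ.toEquiv.subtypeEquiv fun g => by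
    rw [MulEquiv.toEquiv_eq_coe, EquivLike.coe_coe, ← map_pow, map_eq_one_iff φ φ.injective]

lemma natCard_involutions_eq_cd [Fintype α] :
    Nat.card {g : Perm α // g ^ 2 = 1} = cd (Fintype.card α) :=
  natCard_sq_eq_one_congr (Fintype.equivFin α).permCongrHom

end Involutions

theorem cd_succ_succ (n : ℕ) : cd (n + 2) = cd (n + 1) + (n + 1) * cd n := by
  have h := natCard_involutions_eq_cd (α := Option (Fin (n + 1)))
  simp only [Fintype.card_option, Fintype.card_fin] at h
  rw [← h, natCard_involutions_option, natCard_involutions_eq_cd, Fintype.card_fin]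
  simp_rw [natCard_involutions_fixing, natCard_involutions_eq_cd]
  simp

lemma cd_zero : cd 0 = 1 := by
  rw [cd, Nat.card_eq_fintype_card]; decide

lemma cd_one : cd 1 = 1 := by
  rw [cd, Nat.card_eq_fintype_card]; decide

lemma cd_pos (n : ℕ) : 0 < cd n := by
  induction n using Nat.twoStepInduction with
  | zero => simp [cd_zero]
  | one => simp [cd_one]
  | more n _ _ => rw [cd_succ_succ]; positivity

open Topology Real

lemma sqrt_add_two_mul_one_add_sqrt_le {x : ℝ} (hx : 0 ≤ x) :
    √(x + 2) * (1 + √x) ≤ x + 2 + √x := by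
  have hs := sq_sqrt (show 0 ≤ x + 2 by linarith)
  have ht := sq_sqrt hx
  nlinarith [sqrt_nonneg (x + 2), sqrt_nonneg x, mul_nonneg (sqrt_nonneg (x + 2)) (sqrt_nonneg x)]

-- The two bounds feed each other: the lower one at `n` gives the upper one at `n + 1`, and
-- conversely.
lemma cd_succ_mem_Icc (n : ℕ) :
    (cd (n + 1) : ℝ) ∈ Set.Icc (√(n + 1) * cd n) ((1 + √n) * cd n) := by
  induction n with
  | zero => simp [cd_zero, cd_one]
  | succ n ih =>
    obtain ⟨hlow, hupp⟩ := ih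
    have hrec : (cd (n + 2) : ℝ) = cd (n + 1) + (n + 1) * cd n := by
      rw [cd_succ_succ]; push_cast; ring
    have hsq : √(n + 1) * √(n + 1) = (n + 1 : ℝ) := mul_self_sqrt (by positivity)
    push_cast
    rw [show (n : ℝ) + 1 + 1 = n + 2 by ring, hrec]
    constructor
    · have key := sqrt_add_two_mul_one_add_sqrt_le n.cast_nonneg
      refine le_of_mul_le_mul_left ?_ (by positivity : 0 < 1 + √(n : ℝ))
      calc (1 + √(n : ℝ)) * (√(n + 2) * cd (n + 1))
          = (√(n + 2) * (1 + √n)) * cd (n + 1) := by ring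
        _ ≤ (n + 2 + √n) * cd (n + 1) := by gcongr
        _ = (1 + √n) * cd (n + 1) + (n + 1) * cd (n + 1) := by ring
        _ ≤ (1 + √n) * cd (n + 1) + (n + 1) * ((1 + √n) * cd n) := by gcongr
        _ = (1 + √n) * (cd (n + 1) + (n + 1) * cd n) := by ring
    · calc (cd (n + 1) : ℝ) + (n + 1) * cd n = cd (n + 1) + √(n + 1) * (√(n + 1) * cd n) := by
            rw [← mul_assoc, hsq]
        _ ≤ cd (n + 1) + √(n + 1) * cd (n + 1) := by gcongr
        _ = (1 + √(n + 1)) * cd (n + 1) := by ring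

lemma tendsto_cd_succ_div :
    Tendsto (fun n : ℕ => (cd (n + 1) : ℝ) / (√(n + 1) * cd n)) atTop (𝓝 1) := by
  have hbounds (n : ℕ) : 1 ≤ (cd (n + 1) : ℝ) / (√(n + 1) * cd n) ∧
      (cd (n + 1) : ℝ) / (√(n + 1) * cd n) ≤ 1 + (√(n + 1 : ℝ))⁻¹ := by
    have hpos : 0 < √(n + 1 : ℝ) * cd n := by have := cd_pos n; positivity
    obtain ⟨hlow, hupp⟩ := cd_succ_mem_Icc n
    refine ⟨by rwa [le_div_iff₀ hpos, one_mul], ?_⟩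
    rw [div_le_iff₀ hpos]
    calc (cd (n + 1) : ℝ) ≤ (1 + √n) * cd n := hupp
      _ ≤ (1 + √(n + 1)) * cd n := by gcongr; linarith
      _ = _ := by field_simp; ring
  have hupper : Tendsto (fun n : ℕ => 1 + (√(n + 1 : ℝ))⁻¹) atTop (𝓝 1) := by
    simpa using (tendsto_inv_atTop_zero.comp <| tendsto_sqrt_atTop.comp <|
      tendsto_atTop_add_const_right _ 1 tendsto_natCast_atTop_atTop).const_add 1
  exact tendsto_of_tendsto_of_tendsto_of_le_of_le tendsto_const_nhds hupper
    (fun n => (hbounds n).1) (fun n => (hbounds n).2)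

lemma tendsto_div_natCast_of_tendsto_sub {u : ℕ → ℝ} {l : ℝ}
    (h : Tendsto (fun n => u (n + 1) - u n) atTop (𝓝 l)) :
    Tendsto (fun n : ℕ => u n / n) atTop (𝓝 l) := by
  have := h.cesaro.add (tendsto_const_div_atTop_nhds_zero_nat (u 0))
  rw [add_zero] at this
  refine this.congr fun n => ?_
  rw [Finset.sum_range_sub]
  ring

lemma tendsto_log_cd_sub_div :
    Tendsto (fun n : ℕ => (log (cd n) - n / 2 * log n) / n) atTop (𝓝 (-(1 / 2))) := by
  refine tendsto_div_natCast_of_tendsto_sub ?_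
  have hratio : Tendsto (fun n : ℕ => log ((cd (n + 1) : ℝ) / (√(n + 1) * cd n))) atTop (𝓝 0) := by
    have := (continuousAt_log one_ne_zero).tendsto.comp tendsto_cd_succ_div
    rwa [log_one] at this
  have hlog : Tendsto (fun n : ℕ => (n : ℝ) * log (1 + 1 / n)) atTop (𝓝 1) :=
    (tendsto_mul_log_one_add_div_atTop 1).comp tendsto_natCast_atTop_atTop
  have hdiff := hratio.sub (hlog.const_mul (1 / 2))
  rw [zero_sub, mul_one] at hdiff
  refine hdiff.congr' ?_
  filter_upwards [eventually_ge_atTop 1] with n (hn : 1 ≤ n)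
  have hn_pos : (0 : ℝ) < n := by exact_mod_cast hn
  have hcd (m : ℕ) : (cd m : ℝ) ≠ 0 := by have := cd_pos m; positivity
  rw [log_div (hcd _) (by have := hcd n; positivity), log_mul (by positivity) (hcd n),
    log_sqrt (by positivity), one_add_div hn_pos.ne', log_div (by positivity) hn_pos.ne']
  push_cast
  field_simp
  ring

/-- The involution numbers satisfy `cd(n)^(1/n) / √n → 1/√e = exp(-1/2)` as `n → ∞`. -/
theorem cd_root_asymptotics :
    Tendsto (fun n : ℕ => ((cd n : ℝ)) ^ (1 / (n : ℝ)) / Real.sqrt n) atTop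
      (nhds (Real.exp (-(1 / 2)))) := by
  refine ((continuous_exp.tendsto _).comp tendsto_log_cd_sub_div).congr' ?_
  filter_upwards [eventually_ge_atTop 1] with n (hn : 1 ≤ n)
  have hn_pos : (0 : ℝ) < n := by exact_mod_cast hn
  rw [Function.comp_apply, rpow_def_of_pos (by exact_mod_cast cd_pos n),
    ← exp_log (sqrt_pos.2 hn_pos), log_sqrt hn_pos.le, ← exp_sub]
  congr 1
  field_simp
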